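/- Let p be an odd prime, r ≥ 3 with ℓ = 2⌊r/3⌋, and let χ be a primitive Dirichlet character mod p^r. Then for any integers m, m', q, n, q' with p ∤ m and p ∤ (n + q'), the sum 𝒜 = Σ*_{α mod p^ℓ} χ̄(m − α p^{r−ℓ}) χ(m' + α q (n+q')^{-1} p^{r−ℓ}) satisfies |𝒜| ≤ p^{ℓ/2} · #{α₂ mod p^{ℓ/2} : p ∤ A(α₂), p^{ℓ/2} | b·C(α₂)}, where Σ* denotes summation over α coprime to p, and A, C are the explicit functions defined by A(α₂) = m'·(m − α₂p^{r−ℓ})^{-1} + q(n+q')^{-1} α₂ p^{r−ℓ}(m − α₂p^{r−ℓ})^{-1}, B(α₂) = m'((m−α₂p^{r−ℓ})^{-1})² + q(n+q')^{-1}(m−α₂p^{r−ℓ})^{-1}, C(α₂) = A(α₂)^{-1}B(α₂), and b is the integer with χ(1+Cα₁p^{2(r−ℓ)}) = e(α₁ b C/p^{ℓ/2}). -/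

import Mathlib

open scoped BigOperators Real
open Classical

/-!
Write `α = α₂ + p^{ℓ/2} α₁` with `α₁, α₂ < p^{ℓ/2}`, and put `u(α) = m - α p^{r-ℓ}`,
`v(α) = m' + α q (n+q')⁻¹ p^{r-ℓ}`. Since `p^{2(r-ℓ)+ℓ/2} ≡ 0`, the ratio `v/u` is exactly linear
in `α₁`: `v(α) = u(α) A(α₂) (1 + C(α₂) α₁ p^{r-ℓ/2})`. So the summand `χ̄(u) χ(v)` is
`χ(A(α₂)) ψ^{α₁}` with `ψ = χ(1 + C(α₂) p^{r-ℓ/2})` a `p^{ℓ/2}`-th root of unity, and the `α₁`-sum is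
`p^{ℓ/2} χ(A(α₂))` or `0` according as `ψ = 1` or not. If `ψ = 1`, then also
`χ(1 + C(α₂) p^{2(r-ℓ)}) = ψ^{p^{r-3ℓ/2}} = 1`, which by the definition of `b` means
`p^{ℓ/2} ∣ b C(α₂)`. If `A(α₂)` is not a unit, neither is any `v(α)`, and the `α₁`-sum vanishes.
-/

open Finset

theorem one_add_pow_of_sq_eq_zero {R : Type*} [CommSemiring R] {x : R} (hx : x ^ 2 = 0) (n : ℕ) :
    (1 + x) ^ n = 1 + n * x := by
  induction n with
  | zero => simp
  | succ k ih =>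
    rw [pow_succ, ih, Nat.cast_succ]
    calc (1 + k * x) * (1 + x) = 1 + (k + 1) * x + k * x ^ 2 := by ring
      _ = 1 + (k + 1) * x := by rw [hx, mul_zero, add_zero]

theorem isUnit_iff_of_isNilpotent_sub {R : Type*} [CommRing R] {a b : R}
    (h : IsNilpotent (a - b)) : IsUnit a ↔ IsUnit b :=
  ⟨fun ha ↦ by simpa using h.neg.isUnit_add_left_of_commute ha (.all _ _),
    fun hb ↦ by simpa using h.isUnit_add_left_of_commute hb (.all _ _)⟩

theorem geom_sum_eq_ite_of_pow_eq_one {K : Type*} [Field K] {c : K} {N : ℕ} (h : c ^ N = 1) :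
    ∑ i ∈ range N, c ^ i = if c = 1 then (N : K) else 0 := by
  split_ifs with hc
  · simp [hc]
  · rw [geom_sum_eq hc, h, sub_self, zero_div]

theorem Finset.sum_range_mul_eq_sum_sum {M : Type*} [AddCommMonoid M] (f : ℕ → M) (a b : ℕ) :
    ∑ x ∈ range (a * b), f x = ∑ j ∈ range b, ∑ i ∈ range a, f (j + b * i) := by
  rw [sum_range, ← finProdFinEquiv.sum_comp, Fintype.sum_prod_type, sum_comm]
  simp [sum_range, finProdFinEquiv]

theorem Complex.exp_two_pi_mul_I_mul_intCast_div_eq_one_iff {k : ℤ} {N : ℕ} (hN : N ≠ 0) :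
    Complex.exp (2 * π * Complex.I * k / N) = 1 ↔ (N : ℤ) ∣ k := by
  rw [show 2 * π * Complex.I * k / N = k * (2 * π * Complex.I / N) by ring, Complex.exp_int_mul,
    (Complex.isPrimitiveRoot_exp N hN).zpow_eq_one_iff_dvd]

namespace MulChar

variable {R : Type*} [CommRing R]

theorem map_one_add_natCast_mul {R' : Type*} [CommMonoidWithZero R'] (χ : MulChar R R') {x : R}
    (hx : x ^ 2 = 0) (n : ℕ) : χ (1 + n * x) = χ (1 + x) ^ n := by
  rw [← map_pow, one_add_pow_of_sq_eq_zero hx]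

theorem star_map_mul_map_mul [Finite Rˣ] (χ : MulChar R ℂ) {u : R} (hu : IsUnit u) (z : R) :
    star (χ u) * χ (u * z) = χ z := by
  rw [star_apply', map_mul, ← mul_assoc, ← mul_apply, inv_mul, one_apply hu, one_mul]

theorem sum_range_map_one_add_mul (χ : MulChar R ℂ) {x : R} (hx : x ^ 2 = 0) {N : ℕ}
    (hN : (N : R) * x = 0) :
    ∑ i ∈ range N, χ (1 + i * x) = if χ (1 + x) = 1 then (N : ℂ) else 0 := by
  simp_rw [map_one_add_natCast_mul χ hx]
  refine geom_sum_eq_ite_of_pow_eq_one ?_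
  rw [← map_one_add_natCast_mul χ hx, hN, add_zero, map_one]

end MulChar

theorem DirichletCharacter.norm_sum_range_star_mul_le {n : ℕ} (χ : DirichletCharacter ℂ n)
    {u v : ℕ → ZMod n} {a c : ZMod n} {N : ℕ} (hu : ∀ i, IsUnit (u i))
    (hv : IsUnit a → ∀ i, v i = u i * (a * (1 + i * c)))
    (hva : ∀ i, IsUnit (v i) → IsUnit a) (hc : c ^ 2 = 0) (hN : (N : ZMod n) * c = 0) :
    ‖∑ i ∈ range N, star (χ (u i)) * χ (v i)‖ ≤
      if IsUnit a ∧ χ (1 + c) = 1 then (N : ℝ) else 0 := by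
  by_cases ha : IsUnit a
  · have hterm : ∀ i, star (χ (u i)) * χ (v i) = χ a * χ (1 + i * c) := fun i ↦ by
      rw [hv ha, χ.star_map_mul_map_mul (hu i), map_mul]
    simp_rw [hterm, ← mul_sum, χ.sum_range_map_one_add_mul hc hN, ha, true_and]
    split_ifs
    · simpa [norm_mul] using mul_le_of_le_one_left N.cast_nonneg (χ.norm_le_one a)
    · simp
  · have hterm : ∀ i, star (χ (u i)) * χ (v i) = 0 := fun i ↦ by
      rw [χ.map_nonunit (mt (hva i) ha), mul_zero]
    simp only [hterm, sum_const_zero, norm_zero, ha, false_and, if_false, le_refl]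

section Mobius

variable {R : Type*} [CommRing R] {m m' q w x y j a b c u' : R}

/- With `u(t) = m - t x` and `v(t) = m' + t q w x`, `a = v(j)/u(j)` and `b x` is the derivative
of `v/u` at `j` up to a multiple of `x²`; the first-order expansion at `j + y i` is exact because
`x² y = 0`. -/

theorem mobius_numerator_sub_mul_eq (hu : (m - j * x) * u' = 1)
    (ha : a = m' * u' + q * w * j * x * u') (i : R) :
    m' + (j + y * i) * q * w * x - (m - (j + y * i) * x) * a = x * (y * i * (q * w + a)) := by
  subst ha
  linear_combination (-(m' + q * w * j * x)) * hu

theorem mobius_numerator_eq_mul_one_add (hu : (m - j * x) * u' = 1)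
    (ha : a = m' * u' + q * w * j * x * u') (hb : b = m' * u' ^ 2 + q * w * u') (hc : a * c = b)
    (hxy : x ^ 2 * y = 0) (i : R) :
    m' + (j + y * i) * q * w * x = (m - (j + y * i) * x) * (a * (1 + i * (c * (x * y)))) := by
  subst ha hb
  linear_combination (-(i * x * y) * (m - (j + y * i) * x)) * hc
    + (-(m' + q * w * j * x) - i * x * y * (m' * u' + q * w)) * hu
    + (q * w * j * i * u' + i ^ 2 * y * (m' * u' ^ 2 + q * w * u')) * hxy

end Mobius

namespace ZMod

variable {p r : ℕ}

theorem isNilpotent_natCast_pow_mul {k : ℕ} (hk : k ≠ 0) (z : ZMod (p ^ r)) :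
    IsNilpotent ((p : ZMod (p ^ r)) ^ k * z) :=
  ⟨r, by rw [mul_pow, ← pow_mul, natCast_pow_eq_zero_of_le p
    (Nat.le_mul_of_pos_left r (Nat.pos_of_ne_zero hk)), zero_mul]⟩

theorem isUnit_intCast_sub_mul_pow (hp : p.Prime) {m : ℤ} (hm : ¬(p : ℤ) ∣ m) {k : ℕ}
    (hk : k ≠ 0) (z : ZMod (p ^ r)) : IsUnit ((m : ZMod (p ^ r)) - z * p ^ k) := by
  have hnil : IsNilpotent ((m : ZMod (p ^ r)) - z * p ^ k - m) := by
    simpa [mul_comm z] using (isNilpotent_natCast_pow_mul hk z).neg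
  rw [isUnit_iff_of_isNilpotent_sub hnil, coe_int_isUnit_iff_isCoprime, Nat.cast_pow]
  exact ((Nat.prime_iff_prime_int.mp hp).coprime_iff_not_dvd.mpr hm).pow_left

end ZMod

theorem MulChar.map_one_add_mul_pow_eq_one_of_le {p r : ℕ} {R' : Type*} [CommMonoidWithZero R']
    (χ : MulChar (ZMod (p ^ r)) R') {c : ZMod (p ^ r)} {s t : ℕ} (hst : s ≤ t) (hs : r ≤ 2 * s)
    (h : χ (1 + c * p ^ s) = 1) : χ (1 + c * p ^ t) = 1 := by
  have hsq : (c * p ^ s) ^ 2 = 0 := by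
    rw [mul_pow, ← pow_mul, ZMod.natCast_pow_eq_zero_of_le p (by omega), mul_zero]
  have hpow : c * (p : ZMod (p ^ r)) ^ t = ((p ^ (t - s) : ℕ) : ZMod (p ^ r)) * (c * p ^ s) := by
    rw [Nat.cast_pow, mul_left_comm, ← pow_add, Nat.sub_add_cancel hst]
  rw [hpow, χ.map_one_add_natCast_mul hsq, h, one_pow]

theorem DirichletCharacter.norm_sum_fiber_le {p r : ℕ} (hp : p.Prime)
    (χ : DirichletCharacter ℂ (p ^ r)) {e L : ℕ} (he : e ≠ 0) (hr₁ : r ≤ 2 * e + L)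
    (hr₂ : r ≤ e + 2 * L) {m : ℤ} (hm : ¬(p : ℤ) ∣ m) {m' q w j a b c : ZMod (p ^ r)}
    (ha : a = m' * (m - j * p ^ e)⁻¹ + q * w * j * p ^ e * (m - j * p ^ e)⁻¹)
    (hb : b = m' * ((m - j * p ^ e)⁻¹) ^ 2 + q * w * (m - j * p ^ e)⁻¹)
    (hc : IsUnit a → a * c = b) :
    ‖∑ i ∈ range (p ^ L),
        star (χ (m - (j + p ^ L * i) * p ^ e)) * χ (m' + (j + p ^ L * i) * q * w * p ^ e)‖ ≤
      if IsUnit a ∧ χ (1 + c * p ^ (e + L)) = 1 then ((p ^ L : ℕ) : ℝ) else 0 := by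
  have hu : ∀ z : ZMod (p ^ r), IsUnit ((m : ZMod (p ^ r)) - z * p ^ e) :=
    ZMod.isUnit_intCast_sub_mul_pow hp hm he
  have hinv := ZMod.mul_inv_of_unit _ (hu j)
  have hxy : ((p : ZMod (p ^ r)) ^ e) ^ 2 * p ^ L = 0 := by
    rw [← pow_mul, ← pow_add, ZMod.natCast_pow_eq_zero_of_le p (by omega)]
  refine χ.norm_sum_range_star_mul_le (fun i ↦ hu _) (fun ha' i ↦ ?_) (fun i hv ↦ ?_) ?_ ?_
  · rw [pow_add]
    exact mobius_numerator_eq_mul_one_add hinv ha hb (hc ha') hxy i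
  · have hsub := mobius_numerator_sub_mul_eq (y := (p : ZMod (p ^ r)) ^ L) hinv ha i
    rw [isUnit_iff_of_isNilpotent_sub (hsub ▸ ZMod.isNilpotent_natCast_pow_mul he _),
      IsUnit.mul_iff] at hv
    exact hv.2
  · rw [mul_pow, ← pow_mul, ZMod.natCast_pow_eq_zero_of_le p (by omega), mul_zero]
  · rw [Nat.cast_pow, mul_left_comm, ← pow_add, ZMod.natCast_pow_eq_zero_of_le p (by omega),
      mul_zero]

theorem stmt_8_general (p r ℓ : ℕ) (hp : p.Prime) (hr : 3 ≤ r)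
    (hℓ : ℓ = 2 * (r / 3)) [NeZero (p ^ r)]
    (χ : DirichletCharacter ℂ (p ^ r))
    (m m' q n q' : ℤ) (hm : ¬ (p : ℤ) ∣ m)
    (A B C : ℤ → ZMod (p ^ r))
    (hA : ∀ α₂ : ℤ, A α₂ =
      (m' : ZMod (p ^ r)) * ((m : ZMod (p ^ r)) - (α₂ : ZMod (p ^ r)) * (p : ZMod (p ^ r)) ^ (r - ℓ))⁻¹ +
        (q : ZMod (p ^ r)) * (((n + q' : ℤ) : ZMod (p ^ r)))⁻¹ * (α₂ : ZMod (p ^ r)) *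
          (p : ZMod (p ^ r)) ^ (r - ℓ) *
          ((m : ZMod (p ^ r)) - (α₂ : ZMod (p ^ r)) * (p : ZMod (p ^ r)) ^ (r - ℓ))⁻¹)
    (hB : ∀ α₂ : ℤ, B α₂ =
      (m' : ZMod (p ^ r)) *
          (((m : ZMod (p ^ r)) - (α₂ : ZMod (p ^ r)) * (p : ZMod (p ^ r)) ^ (r - ℓ))⁻¹) ^ 2 +
        (q : ZMod (p ^ r)) * (((n + q' : ℤ) : ZMod (p ^ r)))⁻¹ *
          ((m : ZMod (p ^ r)) - (α₂ : ZMod (p ^ r)) * (p : ZMod (p ^ r)) ^ (r - ℓ))⁻¹)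
    (hC : ∀ α₂ : ℤ, C α₂ = (A α₂)⁻¹ * B α₂)
    (b : ℤ → ℤ)
    (hb : ∀ α₂ α₁ : ℤ, χ (1 + C α₂ * (α₁ : ZMod (p ^ r)) * (p : ZMod (p ^ r)) ^ (2 * (r - ℓ))) =
      Complex.exp (2 * π * Complex.I * α₁ * (b α₂) * ((C α₂).val : ℂ) / ((p ^ (ℓ / 2) : ℕ) : ℂ))) :
    ‖(∑ α ∈ (Finset.range (p ^ ℓ)).filter (fun α => Nat.Coprime α p),
        star (χ ((m : ZMod (p ^ r)) - (α : ZMod (p ^ r)) * (p : ZMod (p ^ r)) ^ (r - ℓ))) *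
          χ ((m' : ZMod (p ^ r)) + (α : ZMod (p ^ r)) * (q : ZMod (p ^ r)) *
            (((n + q' : ℤ) : ZMod (p ^ r)))⁻¹ * (p : ZMod (p ^ r)) ^ (r - ℓ)))‖ ≤
      (p ^ (ℓ / 2) : ℕ) *
        ((Finset.range (p ^ (ℓ / 2))).filter (fun α₂ : ℕ =>
          IsUnit (A (α₂ : ℤ)) ∧ ((p : ℤ) ^ (ℓ / 2)) ∣ (b (α₂ : ℤ) * ((C (α₂ : ℤ)).val : ℤ)))).card := by
  set L := r / 3
  have hℓ2 : ℓ / 2 = L := by omega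
  have hpℓ : p ^ ℓ = p ^ L * p ^ L := by rw [← pow_add]; congr 1; omega
  have hcop : ∀ j i, Nat.Coprime (j + p ^ L * i) p ↔ Nat.Coprime j p := fun j i ↦ by
    rw [← Nat.coprime_pow_right_iff (by omega : 0 < L), Nat.coprime_add_mul_left_left,
      Nat.coprime_pow_right_iff (by omega)]
  rw [hℓ2, hpℓ, sum_filter, sum_range_mul_eq_sum_sum, card_filter, Nat.cast_sum, mul_sum]
  refine (norm_sum_le _ _).trans (sum_le_sum fun j _ ↦ ?_)
  have hfiber := χ.norm_sum_fiber_le hp (e := r - ℓ) (L := L) (by omega) (by omega) (by omega) hm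
    (j := (j : ZMod (p ^ r))) (a := A j) (b := B j) (c := C j) (by simpa using hA j)
    (by simpa using hB j) (fun hu ↦ by rw [hC, ← mul_assoc, ZMod.mul_inv_of_unit _ hu, one_mul])
  have hdvd : χ (1 + C j * p ^ (r - ℓ + L)) = 1 → (p : ℤ) ^ L ∣ b j * (C j).val := fun h ↦ by
    have hexp := hb j 1
    rw [Int.cast_one, mul_one, χ.map_one_add_mul_pow_eq_one_of_le (by omega) (by omega) h,
      hℓ2] at hexp
    exact_mod_cast (Complex.exp_two_pi_mul_I_mul_intCast_div_eq_one_iff (k := b j * (C j).val)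
      (pow_ne_zero L hp.ne_zero)).mp (by convert hexp.symm using 2; push_cast; ring)
  simp_rw [hcop, sum_ite_irrel, sum_const_zero, Nat.cast_ite, Nat.cast_one, Nat.cast_zero,
    mul_ite, mul_one, mul_zero]
  push_cast at hfiber ⊢
  refine le_trans ?_ (hfiber.trans ?_)
  · split_ifs <;> simp
  · by_cases h : IsUnit (A j) ∧ χ (1 + C j * p ^ (r - ℓ + L)) = 1
    · rw [if_pos h, if_pos ⟨h.1, hdvd h.2⟩]
    · rw [if_neg h]
      split_ifs <;> positivity

theorem stmt_8 (p r ℓ : ℕ) (hp : p.Prime) (hodd : p ≠ 2) (hr : 3 ≤ r)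
    (hℓ : ℓ = 2 * (r / 3)) [NeZero (p ^ r)]
    (χ : DirichletCharacter ℂ (p ^ r)) (hχ : χ.IsPrimitive)
    (m m' q n q' : ℤ) (hm : ¬ (p : ℤ) ∣ m) (hnq : ¬ (p : ℤ) ∣ (n + q'))
    (A B C : ℤ → ZMod (p ^ r))
    (hA : ∀ α₂ : ℤ, A α₂ =
      (m' : ZMod (p ^ r)) * ((m : ZMod (p ^ r)) - (α₂ : ZMod (p ^ r)) * (p : ZMod (p ^ r)) ^ (r - ℓ))⁻¹ +
        (q : ZMod (p ^ r)) * (((n + q' : ℤ) : ZMod (p ^ r)))⁻¹ * (α₂ : ZMod (p ^ r)) *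
          (p : ZMod (p ^ r)) ^ (r - ℓ) *
          ((m : ZMod (p ^ r)) - (α₂ : ZMod (p ^ r)) * (p : ZMod (p ^ r)) ^ (r - ℓ))⁻¹)
    (hB : ∀ α₂ : ℤ, B α₂ =
      (m' : ZMod (p ^ r)) *
          (((m : ZMod (p ^ r)) - (α₂ : ZMod (p ^ r)) * (p : ZMod (p ^ r)) ^ (r - ℓ))⁻¹) ^ 2 +
        (q : ZMod (p ^ r)) * (((n + q' : ℤ) : ZMod (p ^ r)))⁻¹ *
          ((m : ZMod (p ^ r)) - (α₂ : ZMod (p ^ r)) * (p : ZMod (p ^ r)) ^ (r - ℓ))⁻¹)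
    (hC : ∀ α₂ : ℤ, C α₂ = (A α₂)⁻¹ * B α₂)
    (b : ℤ → ℤ)
    (hb : ∀ α₂ α₁ : ℤ, χ (1 + C α₂ * (α₁ : ZMod (p ^ r)) * (p : ZMod (p ^ r)) ^ (2 * (r - ℓ))) =
      Complex.exp (2 * π * Complex.I * α₁ * (b α₂) * ((C α₂).val : ℂ) / ((p ^ (ℓ / 2) : ℕ) : ℂ))) :
    ‖(∑ α ∈ (Finset.range (p ^ ℓ)).filter (fun α => Nat.Coprime α p),
        star (χ ((m : ZMod (p ^ r)) - (α : ZMod (p ^ r)) * (p : ZMod (p ^ r)) ^ (r - ℓ))) *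
          χ ((m' : ZMod (p ^ r)) + (α : ZMod (p ^ r)) * (q : ZMod (p ^ r)) *
            (((n + q' : ℤ) : ZMod (p ^ r)))⁻¹ * (p : ZMod (p ^ r)) ^ (r - ℓ)))‖ ≤
      (p ^ (ℓ / 2) : ℕ) *
        ((Finset.range (p ^ (ℓ / 2))).filter (fun α₂ : ℕ =>
          IsUnit (A (α₂ : ℤ)) ∧ ((p : ℤ) ^ (ℓ / 2)) ∣ (b (α₂ : ℤ) * ((C (α₂ : ℤ)).val : ℤ)))).card :=
  stmt_8_general p r ℓ hp hr hℓ χ m m' q n q' hm A B C hA hB hC b hb
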